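/- arXiv:2105.04035 — 4 statements merged into one kernel-verified Lean document; each statement's English description precedes it below -/
import Mathlib

section
/- Let p be a maximal prefix solution to the Knapsack problem (items ordered by decreasing efficiency v_i/s_i, selected greedily until the next item would exceed capacity t). Then there exists an optimal solution z with ‖z − p‖₁ ≤ 2s, where s = max_i s_i. -/
open Finset

namespace MPP

/-- first `m` copies of the multiset represented by `w`, in index order -/
def pref {n : ℕ} (w : Fin n → ℕ) (m : ℕ) : Fin n → ℕ :=
  fun i => min (w i) (m - ∑ k, if k.val < i.val then w k else 0)

lemma pref_le {n : ℕ} (w : Fin n → ℕ) (m : ℕ) (i : Fin n) : pref w m i ≤ w i :=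
  min_le_left _ _

lemma pref_mono {n : ℕ} (w : Fin n → ℕ) {m m' : ℕ} (h : m ≤ m') (i : Fin n) :
    pref w m i ≤ pref w m' i :=
  min_le_min le_rfl (Nat.sub_le_sub_right h _)

lemma pref_sum {n : ℕ} (w : Fin n → ℕ) (m : ℕ) :
    ∑ i, pref w m i = min m (∑ i, w i) := by
  induction n generalizing m with
  | zero => simp
  | succ n ih =>
    rw [Fin.sum_univ_succ, Fin.sum_univ_succ (f := w)]
    have h0 : pref w m 0 = min (w 0) m := by
      unfold pref
      congr 1
      rw [Finset.sum_eq_zero (by intro k _; simp), Nat.sub_zero]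
    have hsucc : ∀ i : Fin n, pref w m i.succ = pref (fun k => w k.succ) (m - w 0) i := by
      intro i
      unfold pref
      congr 1
      have : (∑ k : Fin (n+1), if k.val < i.succ.val then w k else 0)
          = w 0 + ∑ k : Fin n, if k.val < i.val then w k.succ else 0 := by
        rw [Fin.sum_univ_succ]
        simp [Fin.val_succ]
      rw [this, Nat.sub_add_eq]
    rw [h0, Finset.sum_congr rfl (fun i _ => hsucc i), ih]
    omega

lemma pref_eq_self {n : ℕ} (w : Fin n → ℕ) {m : ℕ} (h : ∑ i, w i ≤ m) (i : Fin n) :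
    pref w m i = w i := by
  have hself : (∑ k, if k.val < i.val then w k else 0) + w i ≤ ∑ k, w k := by
    have h1 : (∑ k, if k.val < i.val then w k else 0) + w i
        = ∑ k, ((if k.val < i.val then w k else 0) + (if k = i then w k else 0)) := by
      rw [Finset.sum_add_distrib, Finset.sum_ite_eq' univ i w, if_pos (Finset.mem_univ i)]
    refine h1.le.trans (Finset.sum_le_sum ?_)
    intro k _
    by_cases hk1 : k.val < i.val <;> by_cases hk2 : k = i <;>
      simp [hk1, hk2] <;> omega
  unfold pref
  omega


lemma sum_split {n : ℕ} (s a b : Fin n → ℕ) (h : ∀ i, b i ≤ a i) :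
    ∑ i, s i * a i = ∑ i, s i * b i + ∑ i, s i * (a i - b i) := by
  rw [← Finset.sum_add_distrib]
  refine Finset.sum_congr rfl (fun i _ => ?_)
  rw [← Nat.mul_add, Nat.add_sub_cancel' (h i)]

lemma sum_sub {n : ℕ} (a b : Fin n → ℕ) (h : ∀ i, b i ≤ a i) :
    ∑ i, (a i - b i) = ∑ i, a i - ∑ i, b i := by
  have := sum_split (fun _ => 1) a b h
  simp only [one_mul] at this
  omega

/-- weighted sizes of prefixes grow by at most `S` per step -/
lemma step_bound {n S : ℕ} (s w : Fin n → ℕ) (hsS : ∀ i, s i ≤ S) (m : ℕ) :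
    ∑ i, s i * pref w (m+1) i ≤ ∑ i, s i * pref w m i + S := by
  rw [sum_split s (pref w (m+1)) (pref w m) (pref_mono w (Nat.le_succ m))]
  have h1 : ∑ i, s i * (pref w (m+1) i - pref w m i)
      ≤ S * ∑ i, (pref w (m+1) i - pref w m i) := by
    rw [Finset.mul_sum]
    exact Finset.sum_le_sum (fun i _ => Nat.mul_le_mul_right _ (hsS i))
  have h2 : ∑ i, (pref w (m+1) i - pref w m i) ≤ 1 := by
    rw [sum_sub _ _ (pref_mono w (Nat.le_succ m)), pref_sum, pref_sum]
    omega
  calc ∑ i, s i * pref w m i + ∑ i, s i * (pref w (m+1) i - pref w m i)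
      ≤ ∑ i, s i * pref w m i + S * ∑ i, (pref w (m+1) i - pref w m i) := by omega
    _ ≤ ∑ i, s i * pref w m i + S * 1 := by
        have := h2; exact Nat.add_le_add_left (Nat.mul_le_mul_left _ this) _
    _ = ∑ i, s i * pref w m i + S := by ring

/-- weighted sizes of prefixes grow strictly while copies remain -/
lemma strict_mono_bound {n : ℕ} (s w : Fin n → ℕ) (hs1 : ∀ i, 1 ≤ s i)
    {m m' : ℕ} (hmm : m < m') (hm' : m' ≤ ∑ i, w i) :
    ∑ i, s i * pref w m i < ∑ i, s i * pref w m' i := by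
  rw [sum_split s (pref w m') (pref w m) (pref_mono w hmm.le)]
  have h2 : 1 ≤ ∑ i, (pref w m' i - pref w m i) := by
    rw [sum_sub _ _ (pref_mono w hmm.le), pref_sum, pref_sum]
    omega
  have h1 : ∑ i, (pref w m' i - pref w m i) ≤ ∑ i, s i * (pref w m' i - pref w m i) :=
    Finset.sum_le_sum (fun i _ => by
      calc pref w m' i - pref w m i = 1 * (pref w m' i - pref w m i) := (one_mul _).symm
        _ ≤ s i * (pref w m' i - pref w m i) := Nat.mul_le_mul_right _ (hs1 i))
  omega

/-- Key exchange lemma: if the excess multiset `x` has more than `S` copies and its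
weighted size is less than that of `y` plus `S`, there are nonempty submultisets of
equal weighted size. -/
lemma exchange {n : ℕ} (S : ℕ) (s x y : Fin n → ℕ)
    (hs1 : ∀ i, 1 ≤ s i) (hsS : ∀ i, s i ≤ S)
    (hcount : S + 1 ≤ ∑ i, x i)
    (hED : ∑ i, s i * x i + 1 ≤ ∑ i, s i * y i + S) :
    ∃ c d : Fin n → ℕ, (∀ i, c i ≤ x i) ∧ (∀ i, d i ≤ y i) ∧
      (∑ i, s i * c i = ∑ i, s i * d i) ∧ 0 < ∑ i, s i * c i := by
  classical
  set X : ℕ → ℕ := fun m => ∑ i, s i * pref x m i with hX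
  set Y : ℕ → ℕ := fun k => ∑ i, s i * pref y k i with hY
  set Ty : ℕ := ∑ i, y i with hTy
  set g : ℕ → ℕ := fun m => Nat.findGreatest (fun k => Y k ≤ X m) Ty with hg
  have hS1 : 1 ≤ S := by
    have hn : ∃ i, 0 < x i := by
      by_contra hc
      push_neg at hc
      have : ∑ i, x i = 0 := Finset.sum_eq_zero (fun i _ => Nat.le_zero.mp (hc i))
      omega
    obtain ⟨i, _⟩ := hn
    exact (hs1 i).trans (hsS i)
  have hY0 : Y 0 = 0 := by
    refine Finset.sum_eq_zero (fun i _ => ?_)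
    have : pref y 0 i = 0 := by unfold pref; omega
    rw [this, Nat.mul_zero]
  have hYg : ∀ m, Y (g m) ≤ X m := fun m =>
    Nat.findGreatest_spec (P := fun k => Y k ≤ X m) (Nat.zero_le Ty)
      (show Y 0 ≤ X m by rw [hY0]; exact Nat.zero_le _)
  have hgle : ∀ m, g m ≤ Ty := fun m => Nat.findGreatest_le Ty
  have hYmono : ∀ {k k'}, k ≤ k' → Y k ≤ Y k' := by
    intro k k' h
    exact Finset.sum_le_sum (fun i _ => Nat.mul_le_mul_left _ (pref_mono y h i))
  have hYfull : Y Ty = ∑ i, s i * y i := by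
    refine Finset.sum_congr rfl (fun i _ => ?_)
    rw [pref_eq_self y le_rfl i]
  -- every gap is at most S - 1
  have hgap : ∀ m, X m < Y (g m) + S := by
    intro m
    by_cases hq : g m < Ty
    · have h1 : ¬ (Y (g m + 1) ≤ X m) :=
        Nat.findGreatest_is_greatest (P := fun k => Y k ≤ X m) (Nat.lt_succ_self _) hq
      have h2 : Y (g m + 1) ≤ Y (g m) + S := step_bound s y hsS (g m)
      omega
    · have hq' : g m = Ty := le_antisymm (hgle m) (not_lt.mp hq)
      have h1 : X m ≤ ∑ i, s i * x i :=
        Finset.sum_le_sum (fun i _ => Nat.mul_le_mul_left _ (pref_le x m i))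
      rw [hq', hYfull]
      omega
  -- pigeonhole on the gaps
  have hmaps : ∀ m ∈ Finset.range (S + 2), X m - Y (g m) ∈ Finset.range S := by
    intro m _
    rw [Finset.mem_range]
    have := hgap m
    have := hYg m
    omega
  have base : ∀ m m' : ℕ, m < m' → m' ≤ S + 1 → X m - Y (g m) = X m' - Y (g m') →
      ∃ c d : Fin n → ℕ, (∀ i, c i ≤ x i) ∧ (∀ i, d i ≤ y i) ∧
        (∑ i, s i * c i = ∑ i, s i * d i) ∧ 0 < ∑ i, s i * c i := by
    intro m m' hlt hm' heq
    have hXlt : X m < X m' := strict_mono_bound s x hs1 hlt (by omega)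
    have h1 := hYg m
    have h2 := hYg m'
    have hYY : Y (g m) < Y (g m') := by omega
    have hgg : g m ≤ g m' := by
      by_contra hc
      exact absurd (hYmono (le_of_not_ge hc)) (by omega)
    refine ⟨fun i => pref x m' i - pref x m i, fun i => pref y (g m') i - pref y (g m) i,
      fun i => (Nat.sub_le _ _).trans (pref_le x m' i),
      fun i => (Nat.sub_le _ _).trans (pref_le y (g m') i), ?_, ?_⟩
    · show ∑ i, s i * (pref x m' i - pref x m i) = ∑ i, s i * (pref y (g m') i - pref y (g m) i)
      have hc : X m' = X m + ∑ i, s i * (pref x m' i - pref x m i) :=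
        sum_split s (pref x m') (pref x m) (pref_mono x hlt.le)
      have hd : Y (g m') = Y (g m) + ∑ i, s i * (pref y (g m') i - pref y (g m) i) :=
        sum_split s (pref y (g m')) (pref y (g m)) (pref_mono y hgg)
      omega
    · show 0 < ∑ i, s i * (pref x m' i - pref x m i)
      have hc : X m' = X m + ∑ i, s i * (pref x m' i - pref x m i) :=
        sum_split s (pref x m') (pref x m) (pref_mono x hlt.le)
      omega
  obtain ⟨m, hm, m', hm', hne, heq⟩ :=
    Finset.exists_ne_map_eq_of_card_lt_of_maps_to
      (by rw [Finset.card_range, Finset.card_range]; omega) hmaps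
  rw [Finset.mem_range] at hm hm'
  rcases hne.lt_or_gt with hlt | hlt
  · exact base m m' hlt (by omega) heq
  · exact base m' m hlt (by omega) heq.symm

end MPP

open MPP in
/-- Proximity of an optimal solution to a maximal prefix solution for Knapsack
with multiplicities. Items are sorted by non-increasing efficiency `v i / s i`
(expressed by cross-multiplication), `p` is a maximal prefix solution (either
all items fit, or `p` is a full prefix, zero after, and adding one more copy of
the next available item would exceed the capacity `t`). Then there is an
optimal solution `z` with `‖z - p‖₁ ≤ 2 S`, where `S` bounds all item sizes. -/
theorem maximal_prefix_proximity
    (n : ℕ) (s v u p : Fin n → ℕ) (t S : ℕ)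
    (hs : ∀ i, 1 ≤ s i ∧ s i ≤ S)
    (hsorted : ∀ i j : Fin n, i ≤ j → v j * s i ≤ v i * s j)
    (hpu : ∀ i, p i ≤ u i)
    (hfeas : ∑ i, s i * p i ≤ t)
    (hprefix : (∀ i, p i = u i) ∨
      ∃ j : Fin n, p j < u j ∧ (∀ i, i < j → p i = u i) ∧ (∀ i, j < i → p i = 0) ∧
        t < ∑ i, s i * p i + s j) :
    ∃ z : Fin n → ℕ, (∀ i, z i ≤ u i) ∧ (∑ i, s i * z i ≤ t) ∧
      (∀ y : Fin n → ℕ, (∀ i, y i ≤ u i) → ∑ i, s i * y i ≤ t →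
        ∑ i, v i * y i ≤ ∑ i, v i * z i) ∧
      ∑ i, |(z i : ℤ) - (p i : ℤ)| ≤ 2 * S := by
  classical
  have hs1 : ∀ i, 1 ≤ s i := fun i => (hs i).1
  have hsS : ∀ i, s i ≤ S := fun i => (hs i).2
  rcases hprefix with hall | ⟨j, hju, hbefore, hafter, hcap⟩
  · refine ⟨p, fun i => (hall i).le, hfeas, ?_, ?_⟩
    · intro y hyu hyt
      exact Finset.sum_le_sum (fun i _ =>
        Nat.mul_le_mul_left _ ((hyu i).trans_eq (hall i).symm))
    · simp only [sub_self, abs_zero, Finset.sum_const_zero]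
      positivity
  · -- choose an optimal solution closest to p
    set F : Finset (Fin n → ℕ) := (Finset.Iic u).filter (fun y => ∑ i, s i * y i ≤ t) with hF
    have hmemF : ∀ w : Fin n → ℕ, w ∈ F ↔ (∀ i, w i ≤ u i) ∧ ∑ i, s i * w i ≤ t := by
      intro w
      simp [hF, Finset.mem_filter, Finset.mem_Iic, Pi.le_def]
    have hpF : p ∈ F := (hmemF p).mpr ⟨hpu, hfeas⟩
    obtain ⟨z₀, hz₀F, hz₀max⟩ := F.exists_max_image (fun y => ∑ i, v i * y i) ⟨p, hpF⟩
    have hz₀F' : z₀ ∈ F.filter (fun y => ∑ i, v i * y i = ∑ i, v i * z₀ i) :=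
      Finset.mem_filter.mpr ⟨hz₀F, rfl⟩
    obtain ⟨z, hzF', hzmin⟩ :=
      (F.filter (fun y => ∑ i, v i * y i = ∑ i, v i * z₀ i)).exists_min_image
        (fun y => ∑ i, ((y i - p i) + (p i - y i))) ⟨z₀, hz₀F'⟩
    obtain ⟨hzF, hzM⟩ := Finset.mem_filter.mp hzF'
    obtain ⟨hzu, hzt⟩ := (hmemF z).mp hzF
    have hopt : ∀ y : Fin n → ℕ, (∀ i, y i ≤ u i) → ∑ i, s i * y i ≤ t →
        ∑ i, v i * y i ≤ ∑ i, v i * z i := by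
      intro y hyu hyt
      have h1 : ∑ i, v i * y i ≤ ∑ i, v i * z₀ i := hz₀max y ((hmemF y).mpr ⟨hyu, hyt⟩)
      omega
    refine ⟨z, hzu, hzt, hopt, ?_⟩
    have habs : ∀ i : Fin n, |(z i : ℤ) - (p i : ℤ)| = (((z i - p i) + (p i - z i) : ℕ) : ℤ) := by
      intro i
      rcases Nat.le_total (z i) (p i) with h | h
      · rw [Nat.sub_eq_zero_of_le h, abs_sub_comm, abs_of_nonneg (by push_cast; omega)]
        push_cast; omega
      · rw [Nat.sub_eq_zero_of_le h, abs_of_nonneg (by push_cast; omega)]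
        push_cast; omega
    rw [Finset.sum_congr rfl (fun i _ => habs i), ← Nat.cast_sum]
    by_contra hbig
    push_neg at hbig
    have hbig' : 2 * S + 1 ≤ ∑ i, ((z i - p i) + (p i - z i)) := by exact_mod_cast hbig
    -- bookkeeping identities
    have hsum_split_zp : ∑ i, s i * z i + ∑ i, s i * (p i - z i)
        = ∑ i, s i * p i + ∑ i, s i * (z i - p i) := by
      rw [← Finset.sum_add_distrib, ← Finset.sum_add_distrib]
      refine Finset.sum_congr rfl (fun i _ => ?_)
      rw [← Nat.mul_add, ← Nat.mul_add]
      congr 1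
      omega
    -- move 1: adding one more copy of a deficit item would exceed capacity
    have move1 : ∀ a : Fin n, z a < p a → t < ∑ i, s i * z i + s a := by
      intro a hza
      by_contra hc
      push_neg at hc
      set z' : Fin n → ℕ := fun i => if i = a then z i + 1 else z i with hz'
      have hsz' : ∑ i, s i * z' i = ∑ i, s i * z i + s a := by
        have h1 : ∀ i, s i * z' i = s i * z i + (if i = a then s a else 0) := by
          intro i
          by_cases h : i = a
          · subst h; simp [hz']; ring
          · simp [hz', h]
        rw [Finset.sum_congr rfl (fun i _ => h1 i), Finset.sum_add_distrib,
          Finset.sum_ite_eq' Finset.univ a (fun _ => s a), if_pos (Finset.mem_univ a)]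
      have hvz' : ∑ i, v i * z' i = ∑ i, v i * z i + v a := by
        have h1 : ∀ i, v i * z' i = v i * z i + (if i = a then v a else 0) := by
          intro i
          by_cases h : i = a
          · subst h; simp [hz']; ring
          · simp [hz', h]
        rw [Finset.sum_congr rfl (fun i _ => h1 i), Finset.sum_add_distrib,
          Finset.sum_ite_eq' Finset.univ a (fun _ => v a), if_pos (Finset.mem_univ a)]
      have hz'F : z' ∈ F := by
        refine (hmemF z').mpr ⟨?_, by rw [hsz']; exact hc⟩
        intro i
        by_cases h : i = a
        · subst h
          have h5 : z' i = z i + 1 := by simp [hz']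
          have := hpu i; omega
        · simp only [hz', if_neg h]; exact hzu i
      have hub : ∑ i, v i * z' i ≤ ∑ i, v i * z₀ i := hz₀max z' hz'F
      have hva : v a = 0 := by omega
      have hz'F' : z' ∈ F.filter (fun y => ∑ i, v i * y i = ∑ i, v i * z₀ i) :=
        Finset.mem_filter.mpr ⟨hz'F, by omega⟩
      have hdist : ∑ i, ((z' i - p i) + (p i - z' i)) + 1 = ∑ i, ((z i - p i) + (p i - z i)) := by
        have h1 : ∀ i, ((z' i - p i) + (p i - z' i)) + (if i = a then 1 else 0)
            = ((z i - p i) + (p i - z i)) := by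
          intro i
          by_cases h : i = a
          · subst h
            have h5 : z' i = z i + 1 := by simp [hz']
            have h6 : (if i = i then 1 else 0) = 1 := if_pos rfl
            omega
          · simp [hz', h]
        have h3 : ∑ i, (if i = a then (1:ℕ) else 0) = 1 := by
          rw [Finset.sum_ite_eq' Finset.univ a (fun _ => 1), if_pos (Finset.mem_univ a)]
        have h2 : ∑ i, ((z' i - p i) + (p i - z' i)) + ∑ i, (if i = a then (1:ℕ) else 0)
            = ∑ i, ((z i - p i) + (p i - z i)) := by
          rw [← Finset.sum_add_distrib]
          exact Finset.sum_congr rfl (fun i _ => h1 i)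
        omega
      have hmin2 : ∑ i, ((z i - p i) + (p i - z i)) ≤ ∑ i, ((z' i - p i) + (p i - z' i)) :=
        hzmin z' hz'F'
      omega
    -- get the exchange pair
    have hsplitcount : ∑ i, ((z i - p i) + (p i - z i))
        = ∑ i, (z i - p i) + ∑ i, (p i - z i) := Finset.sum_add_distrib
    have hE1 : ∑ i, s i * (z i - p i) + 1 ≤ ∑ i, s i * (p i - z i) + S := by
      have := hsS j
      omega
    obtain ⟨c, d, hcx, hdy, hcd, hcpos⟩ :
        ∃ c d : Fin n → ℕ, (∀ i, c i ≤ z i - p i) ∧ (∀ i, d i ≤ p i - z i) ∧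
          (∑ i, s i * c i = ∑ i, s i * d i) ∧ 0 < ∑ i, s i * c i := by
      have hcases : S + 1 ≤ ∑ i, (z i - p i) ∨ S + 1 ≤ ∑ i, (p i - z i) := by omega
      rcases hcases with hcase | hcase
      · exact exchange S s (fun i => z i - p i) (fun i => p i - z i) hs1 hsS hcase hE1
      · have hdef : ∃ a, 0 < p a - z a := by
          by_contra hcon
          push_neg at hcon
          have : ∑ i, (p i - z i) = 0 :=
            Finset.sum_eq_zero (fun i _ => by have := hcon i; omega)
          omega
        obtain ⟨a, ha⟩ := hdef
        have hE2 : ∑ i, s i * (p i - z i) + 1 ≤ ∑ i, s i * (z i - p i) + S := by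
          have h1 := move1 a (by omega)
          have h2 := hsS a
          omega
        obtain ⟨c', d', h1, h2, h3, h4⟩ :=
          exchange S s (fun i => p i - z i) (fun i => z i - p i) hs1 hsS hcase hE2
        exact ⟨d', c', h2, h1, h3.symm, by omega⟩
    -- the exchanged solution
    have hcz : ∀ i, c i ≤ z i := fun i => (hcx i).trans (Nat.sub_le _ _)
    have hval : ∑ i, v i * c i ≤ ∑ i, v i * d i := by
      have h1 : s j * ∑ i, v i * c i ≤ v j * ∑ i, s i * c i := by
        rw [Finset.mul_sum, Finset.mul_sum]
        refine Finset.sum_le_sum (fun i _ => ?_)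
        by_cases h0 : c i = 0
        · simp [h0]
        · have hji : j ≤ i := by
            by_contra hc'
            have h2 : p i < z i := by have := hcx i; omega
            have h3 : p i = u i := hbefore i (lt_of_not_ge hc')
            have := hzu i; omega
          have h4 := hsorted j i hji
          calc s j * (v i * c i) = (v i * s j) * c i := by ring
            _ ≤ (v j * s i) * c i := Nat.mul_le_mul_right _ h4
            _ = v j * (s i * c i) := by ring
      have h2 : v j * ∑ i, s i * d i ≤ s j * ∑ i, v i * d i := by
        rw [Finset.mul_sum, Finset.mul_sum]
        refine Finset.sum_le_sum (fun i _ => ?_)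
        by_cases h0 : d i = 0
        · simp [h0]
        · have hij : i ≤ j := by
            by_contra hc'
            have h2 : z i < p i := by have := hdy i; omega
            have h3 : p i = 0 := hafter i (lt_of_not_ge hc')
            omega
          have h4 := hsorted i j hij
          calc v j * (s i * d i) = (v j * s i) * d i := by ring
            _ ≤ (v i * s j) * d i := Nat.mul_le_mul_right _ h4
            _ = s j * (v i * d i) := by ring
      rw [hcd] at h1
      exact Nat.le_of_mul_le_mul_left (h1.trans h2) (by have := hs1 j; omega)
    set z' : Fin n → ℕ := fun i => z i - c i + d i with hz'
    have hsz' : ∑ i, s i * z' i + ∑ i, s i * c i = ∑ i, s i * z i + ∑ i, s i * d i := by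
      rw [← Finset.sum_add_distrib, ← Finset.sum_add_distrib]
      refine Finset.sum_congr rfl (fun i _ => ?_)
      rw [← Nat.mul_add, ← Nat.mul_add]
      congr 1
      have := hcx i; have := hdy i
      simp only [hz']
      omega
    have hvz' : ∑ i, v i * z' i + ∑ i, v i * c i = ∑ i, v i * z i + ∑ i, v i * d i := by
      rw [← Finset.sum_add_distrib, ← Finset.sum_add_distrib]
      refine Finset.sum_congr rfl (fun i _ => ?_)
      rw [← Nat.mul_add, ← Nat.mul_add]
      congr 1
      have := hcx i; have := hdy i
      simp only [hz']
      omega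
    have hz'F : z' ∈ F := by
      refine (hmemF z').mpr ⟨?_, by omega⟩
      intro i
      have := hcx i; have := hdy i; have := hzu i; have := hpu i
      simp only [hz']
      omega
    have hub : ∑ i, v i * z' i ≤ ∑ i, v i * z₀ i := hz₀max z' hz'F
    have hz'F' : z' ∈ F.filter (fun y => ∑ i, v i * y i = ∑ i, v i * z₀ i) :=
      Finset.mem_filter.mpr ⟨hz'F, by omega⟩
    have hcpos' : 0 < ∑ i, c i := by
      rcases Nat.eq_zero_or_pos (∑ i, c i) with h | h
      · exfalso
        have hall0 := (Finset.sum_eq_zero_iff).mp h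
        have : ∑ i, s i * c i = 0 :=
          Finset.sum_eq_zero (fun i hi => by rw [hall0 i hi, Nat.mul_zero])
        omega
      · exact h
    have hdist : ∑ i, ((z' i - p i) + (p i - z' i)) + (∑ i, c i + ∑ i, d i)
        = ∑ i, ((z i - p i) + (p i - z i)) := by
      rw [← Finset.sum_add_distrib, ← Finset.sum_add_distrib]
      refine Finset.sum_congr rfl (fun i _ => ?_)
      have := hcx i; have := hdy i
      simp only [hz']
      omega
    have hmin2 : ∑ i, ((z i - p i) + (p i - z i)) ≤ ∑ i, ((z' i - p i) + (p i - z' i)) :=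
      hzmin z' hz'F'
    omega
end

section
/- Splitting identity: for multiplicities u_i, item sizes s_i, and any integer k ≥ 1, define u_i^↑ = max{0, ⌊u_i/k⌋ − 8} and u_i^↓ = u_i − k·u_i^↑. Then the set of subset sums of the original instance equals { k·t^↑ + t^↓ : t^↑ ∈ S(I^↑), t^↓ ∈ S(I^↓) }, where I^↑ has multiplicities u_i^↑ and I^↓ has multiplicities u_i^↓ on the same sizes s_i. -/
/-- Splitting identity: with `u↑ᵢ = max{0, ⌊uᵢ/k⌋ - 8}` and `u↓ᵢ = uᵢ - k·u↑ᵢ`,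
the subset sums of the original instance are exactly the numbers
`k·t↑ + t↓` where `t↑` is a subset sum of the bundled instance `I↑` and `t↓`
a subset sum of the leftover instance `I↓`. -/
theorem splitting_identity
    (n k : ℕ) (hk : 1 ≤ k) (s u : Fin n → ℕ) (T : ℕ) :
    (∃ x : Fin n → ℕ, (∀ i, x i ≤ u i) ∧ ∑ i, s i * x i = T) ↔
    (∃ y z : Fin n → ℕ,
      (∀ i, y i ≤ u i / k - 8) ∧
      (∀ i, z i ≤ u i - k * (u i / k - 8)) ∧
      k * (∑ i, s i * y i) + (∑ i, s i * z i) = T) := by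
  constructor
  · rintro ⟨x, hx, rfl⟩
    refine ⟨fun i => min (x i / k) (u i / k - 8),
      fun i => x i - k * min (x i / k) (u i / k - 8),
      fun i => min_le_right _ _, ?_, ?_⟩
    · intro i
      dsimp only
      rcases le_or_gt (x i / k) (u i / k - 8) with h | h
      · rw [min_eq_left h]
        have h1 : k * (x i / k) ≤ x i := Nat.mul_div_le _ _
        have h2 : k * (u i / k - 8) ≤ u i := by
          calc k * (u i / k - 8) ≤ k * (u i / k) := by
                exact Nat.mul_le_mul_left _ (Nat.sub_le _ _)
            _ ≤ u i := Nat.mul_div_le _ _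
        have hm : k * (x i / k) ≤ k * (u i / k - 8) := Nat.mul_le_mul_left _ h
        have hmod : x i % k + k * (x i / k) = x i := Nat.mod_add_div _ _
        have hlt : x i % k < k := Nat.mod_lt _ hk
        rcases le_or_gt 8 (u i / k) with h8 | h8
        · have hsub : k * (u i / k - 8) + k * 8 = k * (u i / k) := by
            rw [← Nat.mul_add, Nat.sub_add_cancel h8]
          have h3 : k * (u i / k) ≤ u i := Nat.mul_div_le _ _
          omega
        · have h0 : u i / k - 8 = 0 := by omega
          have hx0 : x i / k = 0 := Nat.le_zero.mp (h0 ▸ h)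
          rw [h0, hx0, Nat.mul_zero]
          exact Nat.sub_le_sub_right (hx i) _
      · rw [min_eq_right h.le]
        exact Nat.sub_le_sub_right (hx i) _
    · dsimp only
      rw [Finset.mul_sum, ← Finset.sum_add_distrib]
      apply Finset.sum_congr rfl
      intro i _
      have hky : k * min (x i / k) (u i / k - 8) ≤ x i :=
        le_trans (Nat.mul_le_mul_left _ (min_le_left _ _)) (Nat.mul_div_le _ _)
      rw [Nat.mul_left_comm, ← Nat.mul_add, Nat.add_sub_cancel' hky]
  · rintro ⟨y, z, hy, hz, rfl⟩
    refine ⟨fun i => k * y i + z i, ?_, ?_⟩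
    · intro i
      have h2 : k * (u i / k - 8) ≤ u i := by
        calc k * (u i / k - 8) ≤ k * (u i / k) := Nat.mul_le_mul_left _ (Nat.sub_le _ _)
          _ ≤ u i := Nat.mul_div_le _ _
      have := Nat.mul_le_mul_left k (hy i)
      have := hz i
      dsimp only
      omega
    · dsimp only
      rw [Finset.mul_sum, ← Finset.sum_add_distrib]
      apply Finset.sum_congr rfl
      intro i _
      ring
end

section
/- Completeness plus progression implies interval coverage: let R, A, G be disjoint finite multisets of positive integers bounded by s, let κ ≥ 1, suppose S(R) mod κ = ℤ_κ with witnesses of sum < κs, suppose S(A) contains the arithmetic progression {a + κ, a + 2κ, …, a + 2sκ}, and suppose Σ(G) ≥ t − a − κ(s+1). Then every integer t with a + κ(s+1) + κs ≤ t ≤ Σ(G) + a + κ(s+1) is a subset sum of R ∪ A ∪ G. -/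
/-- Greedy selection: from a multiset of elements all `≤ s`, for any target
`T` at most the total sum, we can pick a sub-multiset whose sum is `≤ T` but
within `s` of `T`. -/
lemma greedy_pick (s : ℕ) (hs : 1 ≤ s) :
    ∀ (G : Multiset ℕ), (∀ x ∈ G, x ≤ s) → ∀ T, T ≤ G.sum →
      ∃ G', G' ≤ G ∧ G'.sum ≤ T ∧ T < G'.sum + s := by
  intro G
  induction G using Multiset.induction_on with
  | empty =>
      intro _ T hT
      simp only [Multiset.sum_zero, Nat.le_zero] at hT
      exact ⟨0, le_refl _, by simp [hT], by simp [hT]; omega⟩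
  | cons g G ih =>
      intro hG T hT
      have hgs : g ≤ s := hG g (Multiset.mem_cons_self g G)
      have hG' : ∀ x ∈ G, x ≤ s := fun x hx => hG x (Multiset.mem_cons_of_mem hx)
      rw [Multiset.sum_cons] at hT
      by_cases h1 : T ≤ G.sum
      · obtain ⟨G', hle, h2, h3⟩ := ih hG' T h1
        exact ⟨G', le_trans hle (Multiset.le_cons_self G g), h2, h3⟩
      · by_cases h2 : g ≤ T
        · obtain ⟨G', hle, h3, h4⟩ := ih hG' (T - g) (by omega)
          refine ⟨g ::ₘ G', Multiset.cons_le_cons g hle, ?_, ?_⟩ <;>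
            · simp only [Multiset.sum_cons]; omega
        · exact ⟨0, Multiset.zero_le _, by simp, by simp; omega⟩

/-- Completeness plus an arithmetic progression implies interval coverage:
if `S(R) mod κ` covers all residues with witnesses of sum `< κ·s`, `S(A)`
contains the arithmetic progression `a + κ, …, a + 2sκ`, and
`Σ(G) ≥ t - a - κ(s+1)`, then every `t` with
`a + κ(s+1) + κs ≤ t ≤ Σ(G) + a + κ(s+1)` is a subset sum of `R ∪ A ∪ G`. -/
theorem completeness_progression_interval
    (s κ a t : ℕ) (R A G : Multiset ℕ) (hκ : 1 ≤ κ)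
    (hRel : ∀ x ∈ R, 0 < x ∧ x ≤ s)
    (hAel : ∀ x ∈ A, 0 < x ∧ x ≤ s)
    (hGel : ∀ x ∈ G, 0 < x ∧ x ≤ s)
    (hR : ∀ r : ℕ, r < κ → ∃ R', R' ≤ R ∧ R'.sum % κ = r ∧ R'.sum < κ * s)
    (hA : ∀ j : ℕ, 1 ≤ j → j ≤ 2 * s → ∃ A', A' ≤ A ∧ A'.sum = a + j * κ)
    (ht₁ : a + κ * (s + 1) + κ * s ≤ t)
    (ht₂ : t ≤ G.sum + a + κ * (s + 1)) :
    ∃ X, X ≤ R + A + G ∧ X.sum = t := by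
  -- s ≥ 1, else hR at residue 0 is contradictory
  have hs : 1 ≤ s := by
    by_contra h
    have hs0 : s = 0 := by omega
    obtain ⟨R', _, _, hlt⟩ := hR 0 hκ
    rw [hs0] at hlt
    omega
  have hexp : κ * (s + 1) = κ * s + κ := by ring
  -- greedy choice of G'
  obtain ⟨G', hG'le, hG'1, hG'2⟩ := greedy_pick s hs G (fun x hx => (hGel x hx).2)
    (t - a - κ * (s + 1)) (by omega)
  -- residue choice
  have hRr := hR ((t - G'.sum - a) % κ) (Nat.mod_lt _ (by omega))
  obtain ⟨R', hR'le, hR'mod, hR'lt⟩ := hRr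
  have hle : R'.sum ≤ t - G'.sum - a := by omega
  have hdvd : κ ∣ (t - G'.sum - a - R'.sum) :=
    (Nat.modEq_iff_dvd' hle).mp hR'mod
  obtain ⟨j, hj⟩ := hdvd
  have hjl : 1 ≤ j := by
    rcases Nat.eq_zero_or_pos j with h | h
    · rw [h, Nat.mul_zero] at hj; omega
    · exact h
  have hks : κ + s ≤ κ * s + 1 := by nlinarith
  have hju : j ≤ 2 * s := by
    have h2 : κ * j ≤ κ * (2 * s) := by
      have : κ * (2 * s) = κ * s + κ * s := by ring
      omega
    exact Nat.le_of_mul_le_mul_left h2 (by omega)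
  obtain ⟨A', hA'le, hA'sum⟩ := hA j hjl hju
  refine ⟨R' + A' + G', ?_, ?_⟩
  · exact add_le_add (add_le_add hR'le hA'le) hG'le
  · have hsum : (R' + A' + G').sum = R'.sum + A'.sum + G'.sum := by
      simp [Multiset.sum_add]
    rw [hsum, hA'sum]
    have hmc : j * κ = κ * j := by ring
    omega
end

section
/- Exchange argument: suppose p and z are integer vectors in [0,u] such that every item selected by p in excess of z (i.e., every i with p_i > z_i) has efficiency v_i/s_i at least that of every item selected by z in excess of p (i.e., every i with z_i > p_i). Suppose there is a vector w with 0 ≤ w_i ≤ |p_i − z_i| such that, letting w' be its signed version sign-compatible with p − z (w'_i = w_i when p_i > z_i and w'_i = −w_i when z_i > p_i), we have Σ s_i w_i' = 0. Then z + w' is feasible and has value Σ v_i (z_i + w_i') ≥ Σ v_i z_i. -/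
/-- Exchange argument: if every item taken by `p` in excess of `z` is at least
as efficient as every item taken by `z` in excess of `p`, and `w'` is a signed
correction vector compatible with `p - z` whose weighted size-sum vanishes,
then `z + w'` is feasible, has the same total size, and at least the value of `z`. -/
theorem exchange_argument
    (n : ℕ) (s v u p z w' : Fin n → ℤ)
    (hs : ∀ i, 1 ≤ s i) (hv : ∀ i, 0 ≤ v i)
    (hp : ∀ i, 0 ≤ p i ∧ p i ≤ u i)
    (hz : ∀ i, 0 ≤ z i ∧ z i ≤ u i)
    (heff : ∀ i j, z i < p i → p j < z j → v j * s i ≤ v i * s j)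
    (hw_sign : ∀ i, 0 ≤ w' i * (p i - z i))
    (hw_abs : ∀ i, |w' i| ≤ |p i - z i|)
    (hw_size : ∑ i, s i * w' i = 0) :
    (∀ i, 0 ≤ z i + w' i ∧ z i + w' i ≤ u i) ∧
    (∑ i, s i * (z i + w' i) = ∑ i, s i * z i) ∧
    (∑ i, v i * z i ≤ ∑ i, v i * (z i + w' i)) := by
  -- basic pointwise facts about w'
  have hbnd : ∀ i, (z i < p i → 0 ≤ w' i ∧ w' i ≤ p i - z i) ∧
      (p i < z i → w' i ≤ 0 ∧ p i - z i ≤ w' i) ∧ (p i = z i → w' i = 0) := by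
    intro i
    have h1 := hw_sign i
    have h2 := hw_abs i
    constructor
    · intro h
      have hd : 0 < p i - z i := by omega
      have hw : 0 ≤ w' i := by nlinarith
      have := (abs_le.mp (h2.trans_eq (abs_of_pos hd))).2
      exact ⟨hw, this⟩
    constructor
    · intro h
      have hd : p i - z i < 0 := by omega
      have hw : w' i ≤ 0 := by nlinarith
      have := (abs_le.mp (h2.trans_eq (abs_of_neg hd))).1
      constructor
      · exact hw
      · omega
    · intro h
      have : |w' i| ≤ 0 := by rw [h] at h2; simpa using h2
      exact abs_nonpos_iff.mp this
  have hpos : ∀ i, 0 < w' i → z i < p i := by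
    intro i hw
    rcases lt_trichotomy (p i) (z i) with h | h | h
    · have := ((hbnd i).2.1 h).1; omega
    · have := (hbnd i).2.2 h; omega
    · exact h
  have hneg : ∀ i, w' i < 0 → p i < z i := by
    intro i hw
    rcases lt_trichotomy (p i) (z i) with h | h | h
    · exact h
    · have := (hbnd i).2.2 h; omega
    · have := ((hbnd i).1 h).1; omega
  refine ⟨?_, ?_, ?_⟩
  · intro i
    rcases lt_trichotomy (p i) (z i) with h | h | h
    · have := (hbnd i).2.1 h
      have h1 := hp i; have h2 := hz i
      omega
    · have := (hbnd i).2.2 h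
      have h2 := hz i
      omega
    · have := (hbnd i).1 h
      have h1 := hp i; have h2 := hz i
      omega
  · simp only [mul_add, Finset.sum_add_distrib, hw_size]
    omega
  · -- value inequality: suffices 0 ≤ ∑ v i * w' i
    have key : 0 ≤ ∑ i, v i * w' i := by
      by_cases hN : ∃ i, w' i < 0
      · obtain ⟨i0, hi0, hmax⟩ := Finset.exists_max_image
          (Finset.univ.filter fun i => w' i < 0) (fun i => (v i : ℚ) / (s i)) (by
            obtain ⟨i, hi⟩ := hN
            exact ⟨i, by simp [hi]⟩)
        simp only [Finset.mem_filter, Finset.mem_univ, true_and] at hi0 hmax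
        have hs0 : (0:ℚ) < (s i0 : ℚ) := by exact_mod_cast (hs i0).trans_lt' (by norm_num)
        set c : ℚ := (v i0 : ℚ) / (s i0) with hc
        have termwise : ∀ i, c * ((s i : ℚ) * (w' i : ℚ)) ≤ (v i : ℚ) * (w' i : ℚ) := by
          intro i
          have hsi : (0:ℚ) < (s i : ℚ) := by exact_mod_cast (hs i).trans_lt' (by norm_num)
          rcases lt_trichotomy (w' i) 0 with h | h | h
          · have hle : (v i : ℚ) / (s i) ≤ c := hmax i h
            have : (v i : ℚ) ≤ c * (s i) := by
              rw [div_le_iff₀ hsi] at hle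
              linarith [hle]
            have hwq : (w' i : ℚ) < 0 := by exact_mod_cast h
            nlinarith
          · simp [h]
          · have hzp : z i < p i := hpos i h
            have hpq : p i0 < z i0 := hneg i0 hi0
            have := heff i i0 hzp hpq
            have hQ : (v i0 : ℚ) * (s i) ≤ (v i : ℚ) * (s i0) := by exact_mod_cast this
            have : c * (s i) ≤ (v i : ℚ) := by
              rw [hc, div_mul_eq_mul_div, div_le_iff₀ hs0]
              nlinarith
            have hwq : (0:ℚ) < (w' i : ℚ) := by exact_mod_cast h
            nlinarith
        have hsum : (0:ℚ) ≤ ∑ i, (v i : ℚ) * (w' i : ℚ) := by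
          calc (0:ℚ) = c * ∑ i, (s i : ℚ) * (w' i : ℚ) := by
                have : (∑ i, (s i : ℚ) * (w' i : ℚ)) = ((∑ i, s i * w' i : ℤ) : ℚ) := by
                  push_cast; ring_nf
                rw [this, hw_size]; simp
            _ = ∑ i, c * ((s i : ℚ) * (w' i : ℚ)) := by rw [Finset.mul_sum]
            _ ≤ ∑ i, (v i : ℚ) * (w' i : ℚ) := Finset.sum_le_sum fun i _ => termwise i
        have : ((∑ i, v i * w' i : ℤ) : ℚ) = ∑ i, (v i : ℚ) * (w' i : ℚ) := by push_cast; ring_nf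
        exact_mod_cast hsum.trans_eq this.symm
      · push_neg at hN
        have hzero : ∀ i, w' i = 0 := by
          by_contra hcon
          push_neg at hcon
          obtain ⟨i, hi⟩ := hcon
          have hterm : ∀ j, 0 ≤ s j * w' j := fun j =>
            mul_nonneg ((hs j).trans' (by norm_num)) (hN j)
          have hipos : 0 < s i * w' i := by
            have : 0 < w' i := lt_of_le_of_ne (hN i) (Ne.symm hi)
            exact mul_pos (by linarith [hs i]) this
          have : 0 < ∑ j, s j * w' j := by
            refine Finset.sum_pos' (fun j _ => hterm j) ⟨i, Finset.mem_univ i, hipos⟩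
          omega
        simp [hzero]
    simp only [mul_add, Finset.sum_add_distrib]
    omega
end
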